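/- arXiv:1602.00042 — 2 statements merged into one kernel-verified Lean document; each statement's English description precedes it below -/
import Mathlib

section
/- Let L>0 and Ω=(0,L)×(-1,1). There exists a constant c>0, depending only on Ω, such that for every ν>0 and all smooth Ω-periodic, divergence-free, symmetric vector fields u=(u₁,u₂) and w=(w₁,w₂): |∫_Ω ((w·∇)u)·w dx| ≤ (ν/20)‖∇w‖² + c‖∇u‖(1 + ‖∇u‖/ν)(‖w₁‖² + ‖∇w₁‖²). -/
/-!
The integrand `((w·∇)u)·w` is bounded pointwise by `|w|² |∇u|`, so by Cauchy–Schwarz the integral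
is at most `(‖w₁‖²_{L⁴} + ‖w₂‖²_{L⁴}) ‖∇u‖`. On a rectangle, the fundamental theorem of calculus
along horizontal and along vertical lines bounds `f²` both by a function of `x₂` alone and by a
function of `x₁` alone; integrating the product of the two bounds gives Ladyzhenskaya's inequality
`‖f‖²_{L⁴} ≤ (1/L + 2) ‖f‖ (‖f‖ + ‖∇f‖)` on `Ω`. Since `w₂` is odd in `x₂` it vanishes on `x₂ = 0`,
so Poincaré's inequality in `x₂` together with `∂₂w₂ = -∂₁w₁` gives `‖w₂‖ ≤ 2 ‖∇w₁‖`. The only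
term not controlled by `w₁` alone is then `‖∇u‖ ‖∇w₁‖ ‖∇w₂‖`, which Young's inequality splits into
`(ν/20) ‖∇w₂‖²` and a multiple of `‖∇u‖² ‖∇w₁‖² / ν`.
-/

open MeasureTheory Real Filter

noncomputable section

/-- First partial derivative. -/
def d1 (f : ℝ × ℝ → ℝ) (p : ℝ × ℝ) : ℝ := fderiv ℝ f p (1, 0)

/-- Second partial derivative. -/
def d2 (f : ℝ × ℝ → ℝ) (p : ℝ × ℝ) : ℝ := fderiv ℝ f p (0, 1)

/-- Laplacian. -/
def lap (f : ℝ × ℝ → ℝ) (p : ℝ × ℝ) : ℝ := d1 (d1 f) p + d2 (d2 f) p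

/-- The domain Ω = (0,L) × (-1,1). -/
def Omg (L : ℝ) : Set (ℝ × ℝ) := Set.Ioo 0 L ×ˢ Set.Ioo (-1) 1

/-- Squared L² norm over Ω. -/
def nrmSq (L : ℝ) (f : ℝ × ℝ → ℝ) : ℝ := ∫ p in Omg L, (f p) ^ 2

/-- L² norm over Ω. -/
def nrm (L : ℝ) (f : ℝ × ℝ → ℝ) : ℝ := Real.sqrt (nrmSq L f)

/-- Squared L² norm of the gradient over Ω. -/
def gradNrmSq (L : ℝ) (f : ℝ × ℝ → ℝ) : ℝ := ∫ p in Omg L, ((d1 f p) ^ 2 + (d2 f p) ^ 2)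

/-- L² norm of the gradient over Ω. -/
def gradNrm (L : ℝ) (f : ℝ × ℝ → ℝ) : ℝ := Real.sqrt (gradNrmSq L f)

/-- Squared L² norm of the Laplacian over Ω. -/
def lapNrmSq (L : ℝ) (f : ℝ × ℝ → ℝ) : ℝ := ∫ p in Omg L, (lap f p) ^ 2

/-- L² norm of the Laplacian over Ω. -/
def lapNrm (L : ℝ) (f : ℝ × ℝ → ℝ) : ℝ := Real.sqrt (lapNrmSq L f)

/-- Ω-periodic: L-periodic in x₁ and 2-periodic in x₂. -/
def OmgPeriodic (L : ℝ) (f : ℝ × ℝ → ℝ) : Prop :=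
  (∀ x y : ℝ, f (x + L, y) = f (x, y)) ∧ (∀ x y : ℝ, f (x, y + 2) = f (x, y))

/-- Divergence-free vector field. -/
def DivFree (u₁ u₂ : ℝ × ℝ → ℝ) : Prop := ∀ p, d1 u₁ p + d2 u₂ p = 0

/-- Symmetric vector field: first component even in x₂, second odd in x₂. -/
def Symm (u₁ u₂ : ℝ × ℝ → ℝ) : Prop :=
  (∀ x y : ℝ, u₁ (x, -y) = u₁ (x, y)) ∧ (∀ x y : ℝ, u₂ (x, -y) = -u₂ (x, y))

open Set

section Calculus

variable {f : ℝ × ℝ → ℝ}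

lemma continuous_d1 (hf : ContDiff ℝ 1 f) : Continuous (d1 f) :=
  hf.continuous_fderiv_apply one_ne_zero |>.comp (continuous_id.prodMk continuous_const)

lemma continuous_d2 (hf : ContDiff ℝ 1 f) : Continuous (d2 f) :=
  hf.continuous_fderiv_apply one_ne_zero |>.comp (continuous_id.prodMk continuous_const)

lemma hasDerivAt_d1 {x y : ℝ} (hf : DifferentiableAt ℝ f (x, y)) :
    HasDerivAt (fun s => f (s, y)) (d1 f (x, y)) x :=
  hf.hasFDerivAt.comp_hasDerivAt x ((hasDerivAt_id x).prodMk (hasDerivAt_const x y))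

lemma hasDerivAt_d2 {x y : ℝ} (hf : DifferentiableAt ℝ f (x, y)) :
    HasDerivAt (fun t => f (x, t)) (d2 f (x, y)) y :=
  hf.hasFDerivAt.comp_hasDerivAt y ((hasDerivAt_const y x).prodMk (hasDerivAt_id y))

end Calculus

lemma integral_mul_le_sqrt_mul_sqrt {α : Type*} [MeasurableSpace α] {μ : Measure α}
    {f g : α → ℝ} (hf : MemLp f 2 μ) (hg : MemLp g 2 μ) :
    ∫ a, f a * g a ∂μ ≤ √(∫ a, f a ^ 2 ∂μ) * √(∫ a, g a ^ 2 ∂μ) := by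
  have holder := integral_mul_norm_le_Lp_mul_Lq Real.HolderConjugate.two_two
    (by simpa using hf) (by simpa using hg)
  simp only [Real.norm_eq_abs, Real.rpow_two, sq_abs, ← Real.sqrt_eq_rpow] at holder
  calc ∫ a, f a * g a ∂μ ≤ ∫ a, |f a * g a| ∂μ :=
        (le_abs_self _).trans abs_integral_le_integral_abs
    _ ≤ _ := by simpa only [abs_mul] using holder

lemma integral_sq_le_integral_mul_integral_of_le_fst_of_le_snd {α β : Type*}
    [MeasurableSpace α] [MeasurableSpace β] {μ : Measure α} {ν : Measure β} [SFinite μ]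
    [SFinite ν] {g : α × β → ℝ} {G : α → ℝ} {F : β → ℝ} (hG : Integrable G μ)
    (hF : Integrable F ν) (hg : ∀ᵐ p ∂μ.prod ν, 0 ≤ g p ∧ g p ≤ G p.1 ∧ g p ≤ F p.2) :
    ∫ p, g p ^ 2 ∂μ.prod ν ≤ (∫ x, G x ∂μ) * ∫ y, F y ∂ν := by
  rw [← integral_prod_mul]
  refine integral_mono_of_nonneg (.of_forall fun p => sq_nonneg _) (hG.mul_prod hF) ?_
  filter_upwards [hg] with p ⟨hg0, hgG, hgF⟩
  rw [sq]
  exact mul_le_mul hgG hgF hg0 (hg0.trans hgG)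

lemma integrableOn_Ioo_of_continuous {g : ℝ → ℝ} (hg : Continuous g) (a b : ℝ) :
    IntegrableOn g (Ioo a b) :=
  hg.integrableOn_Icc.mono_set Ioo_subset_Icc_self

section Interval

variable {a b : ℝ} {h h' : ℝ → ℝ}

lemma abs_sub_le_integral_abs_deriv (hh : ∀ t, HasDerivAt h (h' t) t) (hh' : Continuous h')
    {x x₀ : ℝ} (hx : x ∈ Ioo a b) (hx₀ : x₀ ∈ Ioo a b) :
    |h x - h x₀| ≤ ∫ t in Ioo a b, |h' t| := by
  rw [← intervalIntegral.integral_eq_sub_of_hasDerivAt (fun t _ => hh t)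
    (hh'.intervalIntegrable _ _)]
  have hsub : uIoc x₀ x ⊆ Ioo a b := fun t ht =>
    ⟨(lt_min hx₀.1 hx.1).trans ht.1, ht.2.trans_lt (max_lt hx₀.2 hx.2)⟩
  calc |∫ t in x₀..x, h' t| ≤ ∫ t in uIoc x₀ x, |h' t| := by
        simpa only [Real.norm_eq_abs] using
          intervalIntegral.norm_integral_le_integral_norm_uIoc (f := h') (μ := volume)
    _ ≤ ∫ t in Ioo a b, |h' t| :=
        setIntegral_mono_set (integrableOn_Ioo_of_continuous hh'.abs a b)
          (.of_forall fun _ => abs_nonneg _) (.of_forall hsub)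

lemma le_integral_average_add_abs_deriv (hh : ∀ t, HasDerivAt h (h' t) t)
    (hh' : Continuous h') {x : ℝ} (hx : x ∈ Ioo a b) :
    h x ≤ ∫ t in Ioo a b, ((b - a)⁻¹ * h t + |h' t|) := by
  have hab : 0 < b - a := sub_pos.2 (hx.1.trans hx.2)
  have hvol : volume.real (Ioo a b) = b - a := by simp [hab.le]
  have hcont : Continuous h := continuous_iff_continuousAt.2 fun t => (hh t).continuousAt
  have hint := integrableOn_Ioo_of_continuous hcont a b
  set D := ∫ t in Ioo a b, |h' t|
  have hpt : ∀ x₀ ∈ Ioo a b, h x ≤ h x₀ + D := fun x₀ hx₀ => by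
    linarith [le_abs_self (h x - h x₀), abs_sub_le_integral_abs_deriv hh hh' hx hx₀]
  have hmono : (b - a) * h x ≤ (∫ t in Ioo a b, h t) + (b - a) * D := by
    have := setIntegral_mono_on (f := fun _ => h x) (g := fun x₀ => h x₀ + D)
      (integrableOn_const (by simp)) (hint.add (integrableOn_const (by simp)))
      measurableSet_Ioo hpt
    rwa [setIntegral_const, integral_add hint (integrableOn_const (by simp)), setIntegral_const,
      hvol, smul_eq_mul, smul_eq_mul] at this
  rw [integral_add (hint.const_mul _) (integrableOn_Ioo_of_continuous hh'.abs a b),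
    integral_const_mul, ← mul_le_mul_iff_of_pos_left hab]
  field_simp
  linarith

lemma sq_le_integral_average_add_abs_deriv (hh : ∀ t, HasDerivAt h (h' t) t)
    (hh' : Continuous h') {x : ℝ} (hx : x ∈ Ioo a b) :
    h x ^ 2 ≤ ∫ t in Ioo a b, ((b - a)⁻¹ * h t ^ 2 + |2 * h t * h' t|) := by
  have hcont : Continuous h := continuous_iff_continuousAt.2 fun t => (hh t).continuousAt
  refine le_integral_average_add_abs_deriv (h := fun t => h t ^ 2) (fun t => ?_)
    (by fun_prop) hx
  simpa [mul_assoc] using (hh t).fun_pow 2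

lemma sq_le_mul_integral_sq_deriv (hh : ∀ t, HasDerivAt h (h' t) t) (hh' : Continuous h')
    {c x : ℝ} (hc : c ∈ Ioo a b) (hhc : h c = 0) (hx : x ∈ Ioo a b) :
    h x ^ 2 ≤ (b - a) * ∫ t in Ioo a b, h' t ^ 2 := by
  have hab : 0 ≤ b - a := sub_nonneg.2 (hx.1.trans hx.2).le
  have hmem : ∀ {g : ℝ → ℝ}, Continuous g → MemLp g 2 (volume.restrict (Ioo a b)) := fun hg =>
    (memLp_two_iff_integrable_sq hg.aestronglyMeasurable).2
      (integrableOn_Ioo_of_continuous (by fun_prop) a b)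
  have hcs := integral_mul_le_sqrt_mul_sqrt (hmem (continuous_const (y := (1 : ℝ))))
    (hmem hh'.abs)
  simp only [one_mul, one_pow, sq_abs, setIntegral_const] at hcs
  have habs : |h x| ≤ √(b - a) * √(∫ t in Ioo a b, h' t ^ 2) := by
    have := abs_sub_le_integral_abs_deriv hh hh' hx hc
    rw [hhc, sub_zero] at this
    simpa [hab] using this.trans hcs
  calc h x ^ 2 = |h x| ^ 2 := (sq_abs _).symm
    _ ≤ (√(b - a) * √(∫ t in Ioo a b, h' t ^ 2)) ^ 2 := by gcongr
    _ = (b - a) * ∫ t in Ioo a b, h' t ^ 2 := by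
        rw [mul_pow, Real.sq_sqrt hab,
          Real.sq_sqrt (setIntegral_nonneg measurableSet_Ioo fun _ _ => sq_nonneg _)]

lemma integral_sq_le_mul_integral_sq_deriv (hh : ∀ t, HasDerivAt h (h' t) t)
    (hh' : Continuous h') {c : ℝ} (hc : c ∈ Ioo a b) (hhc : h c = 0) :
    ∫ t in Ioo a b, h t ^ 2 ≤ (b - a) ^ 2 * ∫ t in Ioo a b, h' t ^ 2 := by
  have hab : 0 ≤ b - a := sub_nonneg.2 (hc.1.trans hc.2).le
  have hcont : Continuous h := continuous_iff_continuousAt.2 fun t => (hh t).continuousAt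
  calc ∫ t in Ioo a b, h t ^ 2 ≤ ∫ _ in Ioo a b, (b - a) * ∫ t in Ioo a b, h' t ^ 2 :=
        setIntegral_mono_on (integrableOn_Ioo_of_continuous (by fun_prop) a b)
          (integrableOn_const (by simp)) measurableSet_Ioo
          fun _ hx => sq_le_mul_integral_sq_deriv hh hh' hc hhc hx
    _ = (b - a) ^ 2 * ∫ t in Ioo a b, h' t ^ 2 := by
        rw [setIntegral_const]
        simp [hab]
        ring

end Interval

section Rectangle

variable {a b c d : ℝ}

lemma restrict_Ioo_prod_Ioo :
    volume.restrict (Ioo a b ×ˢ Ioo c d) =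
      (volume.restrict (Ioo a b)).prod (volume.restrict (Ioo c d)) := by
  rw [Measure.volume_eq_prod, Measure.prod_restrict]

lemma integrable_restrict_prod_restrict_of_continuous {g : ℝ × ℝ → ℝ} (hg : Continuous g) :
    Integrable g ((volume.restrict (Ioo a b)).prod (volume.restrict (Ioo c d))) := by
  rw [← restrict_Ioo_prod_Ioo]
  exact (hg.continuousOn.integrableOn_compact (isCompact_Icc.prod isCompact_Icc)).mono_set
    (prod_mono Ioo_subset_Icc_self Ioo_subset_Icc_self)

lemma setIntegral_Ioo_prod_Ioo {g : ℝ × ℝ → ℝ} (hg : Continuous g) :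
    ∫ p in Ioo a b ×ˢ Ioo c d, g p = ∫ x in Ioo a b, ∫ y in Ioo c d, g (x, y) := by
  rw [restrict_Ioo_prod_Ioo, integral_prod g (integrable_restrict_prod_restrict_of_continuous hg)]

lemma setIntegral_Ioo_prod_Ioo_symm {g : ℝ × ℝ → ℝ} (hg : Continuous g) :
    ∫ p in Ioo a b ×ˢ Ioo c d, g p = ∫ y in Ioo c d, ∫ x in Ioo a b, g (x, y) := by
  rw [restrict_Ioo_prod_Ioo,
    integral_prod_symm g (integrable_restrict_prod_restrict_of_continuous hg)]

variable {f : ℝ × ℝ → ℝ}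

theorem integral_sq_le_mul_integral_sq_d2 (hf : ContDiff ℝ 1 f) {y₀ : ℝ} (hy₀ : y₀ ∈ Ioo c d)
    (hf₀ : ∀ x, f (x, y₀) = 0) :
    ∫ p in Ioo a b ×ˢ Ioo c d, f p ^ 2 ≤
      (d - c) ^ 2 * ∫ p in Ioo a b ×ˢ Ioo c d, d2 f p ^ 2 := by
  have hd2 := continuous_d2 hf
  rw [setIntegral_Ioo_prod_Ioo (g := fun p => f p ^ 2) (by fun_prop),
    setIntegral_Ioo_prod_Ioo (g := fun p => d2 f p ^ 2) (by fun_prop), ← integral_const_mul]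
  refine integral_mono_of_nonneg
    (.of_forall fun x => setIntegral_nonneg measurableSet_Ioo fun _ _ => sq_nonneg _)
    ((integrable_restrict_prod_restrict_of_continuous (g := fun p => d2 f p ^ 2)
      (by fun_prop)).integral_prod_left.const_mul _)
    (.of_forall fun x => ?_)
  exact integral_sq_le_mul_integral_sq_deriv (h' := fun t => d2 f (x, t))
    (fun t => hasDerivAt_d2 (hf.differentiable one_ne_zero _)) (by fun_prop) hy₀ (hf₀ x)

theorem integral_pow_four_le_Ioo_prod_Ioo (hf : ContDiff ℝ 1 f) :
    ∫ p in Ioo a b ×ˢ Ioo c d, f p ^ 4 ≤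
      (∫ p in Ioo a b ×ˢ Ioo c d, ((d - c)⁻¹ * f p ^ 2 + |2 * f p * d2 f p|)) *
        ∫ p in Ioo a b ×ˢ Ioo c d, ((b - a)⁻¹ * f p ^ 2 + |2 * f p * d1 f p|) := by
  have hd1 := continuous_d1 hf
  have hd2 := continuous_d2 hf
  have hdiff : ∀ p, DifferentiableAt ℝ f p := hf.differentiable one_ne_zero
  rw [setIntegral_Ioo_prod_Ioo (g := fun p => (d - c)⁻¹ * f p ^ 2 + |2 * f p * d2 f p|)
      (by fun_prop),
    setIntegral_Ioo_prod_Ioo_symm (g := fun p => (b - a)⁻¹ * f p ^ 2 + |2 * f p * d1 f p|)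
      (by fun_prop)]
  have key := integral_sq_le_integral_mul_integral_of_le_fst_of_le_snd (g := fun p => f p ^ 2)
    (integrable_restrict_prod_restrict_of_continuous (a := a) (b := b) (c := c) (d := d)
      (g := fun p => (d - c)⁻¹ * f p ^ 2 + |2 * f p * d2 f p|) (by fun_prop)).integral_prod_left
    (integrable_restrict_prod_restrict_of_continuous (a := a) (b := b) (c := c) (d := d)
      (g := fun p => (b - a)⁻¹ * f p ^ 2 + |2 * f p * d1 f p|) (by fun_prop)).integral_prod_right
    ?_
  · simpa only [← pow_mul, Nat.reduceMul, ← restrict_Ioo_prod_Ioo] using key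
  rw [← restrict_Ioo_prod_Ioo]
  refine ae_restrict_of_forall_mem (measurableSet_Ioo.prod measurableSet_Ioo) fun p hp => ?_
  exact ⟨sq_nonneg _,
    sq_le_integral_average_add_abs_deriv (fun t => hasDerivAt_d2 (hdiff _)) (by fun_prop) hp.2,
    sq_le_integral_average_add_abs_deriv (fun s => hasDerivAt_d1 (hdiff _)) (by fun_prop) hp.1⟩

end Rectangle

section Domain

variable {L : ℝ} {f : ℝ × ℝ → ℝ}

lemma integrableOn_Omg_of_continuous {g : ℝ × ℝ → ℝ} (hg : Continuous g) :
    IntegrableOn g (Omg L) := by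
  rw [IntegrableOn, Omg, restrict_Ioo_prod_Ioo]
  exact integrable_restrict_prod_restrict_of_continuous hg

lemma memLp_two_Omg_of_continuous {g : ℝ × ℝ → ℝ} (hg : Continuous g) :
    MemLp g 2 (volume.restrict (Omg L)) :=
  (memLp_two_iff_integrable_sq hg.aestronglyMeasurable).2
    (integrableOn_Omg_of_continuous (by fun_prop))

lemma sq_nrm : nrm L f ^ 2 = nrmSq L f :=
  Real.sq_sqrt (integral_nonneg fun _ => sq_nonneg _)

lemma sq_gradNrm : gradNrm L f ^ 2 = gradNrmSq L f :=
  Real.sq_sqrt (integral_nonneg fun _ => by positivity)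

lemma integral_sq_d1_le_gradNrmSq (hf : ContDiff ℝ 1 f) :
    ∫ p in Omg L, d1 f p ^ 2 ≤ gradNrmSq L f := by
  have := continuous_d1 hf
  have := continuous_d2 hf
  exact integral_mono (integrableOn_Omg_of_continuous (by fun_prop))
    (integrableOn_Omg_of_continuous (by fun_prop)) fun p => le_add_of_nonneg_right (sq_nonneg _)

lemma integral_sq_d2_le_gradNrmSq (hf : ContDiff ℝ 1 f) :
    ∫ p in Omg L, d2 f p ^ 2 ≤ gradNrmSq L f := by
  have := continuous_d1 hf
  have := continuous_d2 hf
  exact integral_mono (integrableOn_Omg_of_continuous (by fun_prop))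
    (integrableOn_Omg_of_continuous (by fun_prop)) fun p => le_add_of_nonneg_left (sq_nonneg _)

lemma integral_abs_two_mul_le {φ : ℝ × ℝ → ℝ} (hf : Continuous f) (hφ : Continuous φ)
    (hφf : ∫ p in Omg L, φ p ^ 2 ≤ gradNrmSq L f) :
    ∫ p in Omg L, |2 * f p * φ p| ≤ 2 * nrm L f * gradNrm L f := by
  have hcs := integral_mul_le_sqrt_mul_sqrt (memLp_two_Omg_of_continuous (L := L) hf.abs)
    (memLp_two_Omg_of_continuous hφ.abs)
  simp only [sq_abs] at hcs
  calc ∫ p in Omg L, |2 * f p * φ p| = 2 * ∫ p in Omg L, |f p| * |φ p| := by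
        simp only [abs_mul, abs_two, mul_assoc, integral_const_mul]
    _ ≤ 2 * (nrm L f * gradNrm L f) := by
        gcongr
        exact hcs.trans (mul_le_mul_of_nonneg_left (Real.sqrt_le_sqrt hφf) (Real.sqrt_nonneg _))
    _ = 2 * nrm L f * gradNrm L f := by ring

theorem sqrt_integral_pow_four_le (hL : 0 < L) (hf : ContDiff ℝ 1 f) :
    √(∫ p in Omg L, f p ^ 4) ≤ (L⁻¹ + 2) * (nrm L f * (nrm L f + gradNrm L f)) := by
  have hd1 := continuous_d1 hf
  have hd2 := continuous_d2 hf
  have hc := hf.continuous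
  have hn : 0 ≤ nrm L f := Real.sqrt_nonneg _
  have hg : 0 ≤ gradNrm L f := Real.sqrt_nonneg _
  have hbound : ∀ k, 0 ≤ k → k ≤ L⁻¹ + 2 → ∀ φ : ℝ × ℝ → ℝ, Continuous φ →
      ∫ p in Omg L, φ p ^ 2 ≤ gradNrmSq L f →
      ∫ p in Omg L, (k * f p ^ 2 + |2 * f p * φ p|) ≤
        (L⁻¹ + 2) * (nrm L f * (nrm L f + gradNrm L f)) := fun k hk0 hk φ hφ hφf => by
    rw [integral_add ((integrableOn_Omg_of_continuous (by fun_prop)).const_mul k)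
      (integrableOn_Omg_of_continuous (by fun_prop)), integral_const_mul]
    change k * nrmSq L f + _ ≤ _
    rw [← sq_nrm]
    nlinarith [integral_abs_two_mul_le hc hφ hφf, mul_nonneg hn hg, inv_pos.2 hL,
      mul_le_mul_of_nonneg_right hk (sq_nonneg (nrm L f))]
  have hlad := integral_pow_four_le_Ioo_prod_Ioo (a := 0) (b := L) (c := -1) (d := 1) hf
  rw [sub_zero, sub_neg_eq_add, one_add_one_eq_two] at hlad
  have hK : 0 ≤ (L⁻¹ + 2) * (nrm L f * (nrm L f + gradNrm L f)) := by positivity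
  rw [Real.sqrt_le_left hK, sq]
  calc ∫ p in Omg L, f p ^ 4 ≤ _ := hlad
    _ ≤ _ := mul_le_mul
        (hbound 2⁻¹ (by norm_num) (by linarith [inv_pos.2 hL]) _ hd2
          (integral_sq_d2_le_gradNrmSq hf))
        (hbound L⁻¹ (inv_pos.2 hL).le (by linarith) _ hd1 (integral_sq_d1_le_gradNrmSq hf))
        (integral_nonneg fun p => by positivity) hK

theorem nrm_le_two_mul_gradNrm_of_divFree {w₁ w₂ : ℝ × ℝ → ℝ} (hw₁ : ContDiff ℝ 1 w₁)
    (hw₂ : ContDiff ℝ 1 w₂) (hdiv : DivFree w₁ w₂) (hodd : ∀ x y, w₂ (x, -y) = -w₂ (x, y)) :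
    nrm L w₂ ≤ 2 * gradNrm L w₁ := by
  have hpoincare : nrmSq L w₂ ≤ (1 - -1) ^ 2 * ∫ p in Omg L, d2 w₂ p ^ 2 :=
    integral_sq_le_mul_integral_sq_d2 hw₂ (y₀ := 0) ⟨by norm_num, by norm_num⟩ fun x =>
      self_eq_neg.1 (by simpa using hodd x 0)
  have hd2 : ∫ p in Omg L, d2 w₂ p ^ 2 = ∫ p in Omg L, d1 w₁ p ^ 2 := by
    congr 1 with p
    rw [show d2 w₂ p = -d1 w₁ p by linarith [hdiv p], neg_sq]
  rw [nrm, Real.sqrt_le_left (by unfold gradNrm; positivity), mul_pow, sq_gradNrm]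
  norm_num at hpoincare
  linarith [integral_sq_d1_le_gradNrmSq (L := L) hw₁]

lemma abs_convection_le (a b x y z t : ℝ) :
    |(a * x + b * y) * a + (a * z + b * t) * b| ≤
      (a ^ 2 + b ^ 2) * √(x ^ 2 + y ^ 2 + (z ^ 2 + t ^ 2)) := by
  rw [← Real.sqrt_sq (by positivity : 0 ≤ a ^ 2 + b ^ 2), ← Real.sqrt_mul (by positivity)]
  apply Real.abs_le_sqrt
  nlinarith [sq_nonneg (a ^ 2 * y - a * b * x), sq_nonneg (a ^ 2 * z - a * b * x),
    sq_nonneg (a ^ 2 * t - b ^ 2 * x), sq_nonneg (a * b * z - a * b * y),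
    sq_nonneg (a * b * t - b ^ 2 * y), sq_nonneg (a * b * t - b ^ 2 * z)]

theorem abs_integral_convection_le {u₁ u₂ w₁ w₂ : ℝ × ℝ → ℝ} (hu₁ : ContDiff ℝ 1 u₁)
    (hu₂ : ContDiff ℝ 1 u₂) (hw₁ : Continuous w₁) (hw₂ : Continuous w₂) :
    |∫ p in Omg L, ((w₁ p * d1 u₁ p + w₂ p * d2 u₁ p) * w₁ p
        + (w₁ p * d1 u₂ p + w₂ p * d2 u₂ p) * w₂ p)| ≤
      (√(∫ p in Omg L, w₁ p ^ 4) + √(∫ p in Omg L, w₂ p ^ 4)) *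
        √(gradNrmSq L u₁ + gradNrmSq L u₂) := by
  have := continuous_d1 hu₁
  have := continuous_d2 hu₁
  have := continuous_d1 hu₂
  have := continuous_d2 hu₂
  set m : ℝ × ℝ → ℝ := fun p => √(d1 u₁ p ^ 2 + d2 u₁ p ^ 2 + (d1 u₂ p ^ 2 + d2 u₂ p ^ 2))
  have hm : Continuous m := by fun_prop
  have hm2 : ∫ p in Omg L, m p ^ 2 = gradNrmSq L u₁ + gradNrmSq L u₂ := by
    have hsq : ∀ p, m p ^ 2 = d1 u₁ p ^ 2 + d2 u₁ p ^ 2 + (d1 u₂ p ^ 2 + d2 u₂ p ^ 2) :=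
      fun p => Real.sq_sqrt (by positivity)
    simp_rw [hsq]
    exact integral_add (integrableOn_Omg_of_continuous (by fun_prop))
      (integrableOn_Omg_of_continuous (by fun_prop))
  have hcs : ∀ w : ℝ × ℝ → ℝ, Continuous w → ∫ p in Omg L, w p ^ 2 * m p ≤
      √(∫ p in Omg L, w p ^ 4) * √(gradNrmSq L u₁ + gradNrmSq L u₂) := fun w hw => by
    simpa only [← pow_mul, hm2] using integral_mul_le_sqrt_mul_sqrt
      (memLp_two_Omg_of_continuous (L := L) (by fun_prop : Continuous fun p => w p ^ 2))
      (memLp_two_Omg_of_continuous hm)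
  calc _ ≤ ∫ p in Omg L, |(w₁ p * d1 u₁ p + w₂ p * d2 u₁ p) * w₁ p
        + (w₁ p * d1 u₂ p + w₂ p * d2 u₂ p) * w₂ p| := abs_integral_le_integral_abs
    _ ≤ ∫ p in Omg L, (w₁ p ^ 2 * m p + w₂ p ^ 2 * m p) := by
        refine integral_mono (integrableOn_Omg_of_continuous ?_)
          (integrableOn_Omg_of_continuous ?_) fun p => ?_
        · fun_prop
        · fun_prop
        exact (abs_convection_le _ _ _ _ _ _).trans_eq (add_mul _ _ _)
    _ = (∫ p in Omg L, w₁ p ^ 2 * m p) + ∫ p in Omg L, w₂ p ^ 2 * m p :=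
        integral_add (integrableOn_Omg_of_continuous (by fun_prop))
          (integrableOn_Omg_of_continuous (by fun_prop))
    _ ≤ _ := by
        rw [add_mul]
        exact add_le_add (hcs w₁ hw₁) (hcs w₂ hw₂)

end Domain

lemma young_absorb_cross_term {K Γ ν n₁ g₁ n₂ g₂ : ℝ} (hK : 0 ≤ K) (hΓ : 0 ≤ Γ) (hν : 0 < ν)
    (hg₁ : 0 ≤ g₁) (hn₂ : 0 ≤ n₂) (hg₂ : 0 ≤ g₂) (hn₂g₁ : n₂ ≤ 2 * g₁) :
    K * (n₁ * (n₁ + g₁) + n₂ * (n₂ + g₂)) * Γ ≤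
      ν / 20 * (g₁ ^ 2 + g₂ ^ 2) +
        (6 * K + 20 * K ^ 2) * Γ * (1 + Γ / ν) * (n₁ ^ 2 + g₁ ^ 2) := by
  have hX : n₁ * (n₁ + g₁) + n₂ * (n₂ + g₂) ≤ 6 * (n₁ ^ 2 + g₁ ^ 2) + 2 * g₂ * g₁ := by
    nlinarith [sq_nonneg (n₁ - g₁), mul_le_mul_of_nonneg_right hn₂g₁ hg₂]
  have hyoung : 2 * g₂ * (K * Γ * g₁) ≤ ν / 20 * g₂ ^ 2 + (ν / 20)⁻¹ * (K * Γ * g₁) ^ 2 :=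
    two_mul_le_add_mul_sq (by positivity)
  have hΓν : 0 ≤ Γ / ν := by positivity
  have hN : 0 ≤ n₁ ^ 2 + g₁ ^ 2 := by positivity
  calc K * (n₁ * (n₁ + g₁) + n₂ * (n₂ + g₂)) * Γ
      ≤ K * (6 * (n₁ ^ 2 + g₁ ^ 2) + 2 * g₂ * g₁) * Γ := by gcongr
    _ = 6 * K * Γ * (n₁ ^ 2 + g₁ ^ 2) + 2 * g₂ * (K * Γ * g₁) := by ring
    _ ≤ 6 * K * Γ * (n₁ ^ 2 + g₁ ^ 2) + (ν / 20 * g₂ ^ 2 + (ν / 20)⁻¹ * (K * Γ * g₁) ^ 2) := by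
        gcongr
    _ = 6 * K * Γ * (n₁ ^ 2 + g₁ ^ 2) + ν / 20 * g₂ ^ 2 + 20 * K ^ 2 * Γ * (Γ / ν) * g₁ ^ 2 := by
        field_simp
        ring
    _ ≤ _ := by
        nlinarith [mul_nonneg (mul_nonneg (mul_nonneg hK hΓ) hΓν) hN,
          mul_nonneg (mul_nonneg (sq_nonneg K) hΓ) hN,
          mul_nonneg (mul_nonneg (mul_nonneg (sq_nonneg K) hΓ) hΓν) (sq_nonneg n₁),
          mul_nonneg hν.le (sq_nonneg g₁)]

/-- estimate (3.10) of the paper: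
`|∫_Ω ((w·∇)u)·w| ≤ (ν/20)‖∇w‖² + c‖∇u‖(1 + ‖∇u‖/ν)(‖w₁‖² + ‖∇w₁‖²)`. -/
theorem trilinear_estimate (L : ℝ) (hL : 0 < L) :
    ∃ c : ℝ, 0 < c ∧ ∀ ν : ℝ, 0 < ν →
      ∀ u₁ u₂ w₁ w₂ : ℝ × ℝ → ℝ,
        ContDiff ℝ (⊤ : ℕ∞) u₁ → ContDiff ℝ (⊤ : ℕ∞) u₂ → ContDiff ℝ (⊤ : ℕ∞) w₁ → ContDiff ℝ (⊤ : ℕ∞) w₂ →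
        OmgPeriodic L u₁ → OmgPeriodic L u₂ → OmgPeriodic L w₁ → OmgPeriodic L w₂ →
        DivFree u₁ u₂ → DivFree w₁ w₂ → Symm u₁ u₂ → Symm w₁ w₂ →
        |∫ p in Omg L,
            ((w₁ p * d1 u₁ p + w₂ p * d2 u₁ p) * w₁ p
              + (w₁ p * d1 u₂ p + w₂ p * d2 u₂ p) * w₂ p)| ≤
          ν / 20 * (gradNrmSq L w₁ + gradNrmSq L w₂)
            + c * Real.sqrt (gradNrmSq L u₁ + gradNrmSq L u₂)
                * (1 + Real.sqrt (gradNrmSq L u₁ + gradNrmSq L u₂) / ν)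
                * (nrmSq L w₁ + gradNrmSq L w₁) := by
  refine ⟨6 * (L⁻¹ + 2) + 20 * (L⁻¹ + 2) ^ 2, by positivity, ?_⟩
  intro ν hν u₁ u₂ w₁ w₂ hu₁ hu₂ hw₁ hw₂ _ _ _ _ _ hdivw _ hsymw
  have hC1 : ∀ {f : ℝ × ℝ → ℝ}, ContDiff ℝ (⊤ : ℕ∞) f → ContDiff ℝ 1 f :=
    fun hf => hf.of_le (by exact_mod_cast le_top)
  have hlady : √(∫ p in Omg L, w₁ p ^ 4) + √(∫ p in Omg L, w₂ p ^ 4) ≤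
      (L⁻¹ + 2) * (nrm L w₁ * (nrm L w₁ + gradNrm L w₁) +
        nrm L w₂ * (nrm L w₂ + gradNrm L w₂)) := by
    rw [mul_add]
    exact add_le_add (sqrt_integral_pow_four_le hL (hC1 hw₁))
      (sqrt_integral_pow_four_le hL (hC1 hw₂))
  rw [← sq_nrm, ← sq_gradNrm (f := w₁), ← sq_gradNrm (f := w₂)]
  calc _ ≤ _ := abs_integral_convection_le (hC1 hu₁) (hC1 hu₂) hw₁.continuous hw₂.continuous
    _ ≤ _ := mul_le_mul_of_nonneg_right hlady (Real.sqrt_nonneg _)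
    _ ≤ _ := young_absorb_cross_term (by positivity) (Real.sqrt_nonneg _) hν
        (Real.sqrt_nonneg _) (Real.sqrt_nonneg _) (Real.sqrt_nonneg _)
        (nrm_le_two_mul_gradNrm_of_divFree (hC1 hw₁) (hC1 hw₂) hdivw hsymw.2)
end
end

section
/- Let L>0, Ω=(0,L)×(-1,1), and κ>0. Let w=(w₁,w₂) be a smooth Ω-periodic, divergence-free, symmetric vector field and let ξ be a smooth Ω-periodic scalar function. Then |∫_Ω w₂(x) Δξ(x) dx| ≤ (κ/20)‖Δξ‖² + (5/κ)‖∇w₁‖². -/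
/-!
Since `w₂` is odd in `x₂` it vanishes on `x₂ = 0`, and the divergence-free condition gives
`∂₂w₂ = -∂₁w₁`; hence `w₂(x₁, x₂) = -∫₀^{x₂} ∂₁w₁(x₁, t) dt`. By Cauchy–Schwarz,
`w₂(x₁, x₂)² ≤ |x₂| ∫₋₁¹ (∂₁w₁)²(x₁, t) dt`, and as `∫₋₁¹ |x₂| dx₂ = 1` this yields the
Poincaré-type bound `‖w₂‖² ≤ ‖∂₁w₁‖² ≤ ‖∇w₁‖²`. Young's inequality
`|ab| ≤ (κ/20) b² + (5/κ) a²` finishes the estimate.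
-/

open MeasureTheory Real Filter

noncomputable section

open Set
open scoped Interval ENNReal

lemma contDiff_d1 {n : WithTop ℕ∞} {f : ℝ × ℝ → ℝ} (hf : ContDiff ℝ (n + 1) f) :
    ContDiff ℝ n (d1 f) :=
  (hf.fderiv_right le_rfl).clm_apply contDiff_const

lemma contDiff_d2 {n : WithTop ℕ∞} {f : ℝ × ℝ → ℝ} (hf : ContDiff ℝ (n + 1) f) :
    ContDiff ℝ n (d2 f) :=
  (hf.fderiv_right le_rfl).clm_apply contDiff_const

lemma continuous_lap {f : ℝ × ℝ → ℝ} (hf : ContDiff ℝ 2 f) : Continuous (lap f) :=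
  (contDiff_d1 (n := 0) (contDiff_d1 (n := 1) hf)).continuous.add
    (contDiff_d2 (n := 0) (contDiff_d2 (n := 1) hf)).continuous

lemma hasDerivAt_slice_d2 {w : ℝ × ℝ → ℝ} (hw : Differentiable ℝ w) (x t : ℝ) :
    HasDerivAt (fun s => w (x, s)) (d2 w (x, t)) t :=
  (hw (x, t)).hasFDerivAt.comp_hasDerivAt t ((hasDerivAt_const t x).prodMk (hasDerivAt_id t))

lemma sub_eq_intervalIntegral_d2 {w : ℝ × ℝ → ℝ} (hw : ContDiff ℝ 1 w) (x y : ℝ) :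
    w (x, y) - w (x, 0) = ∫ t in (0 : ℝ)..y, d2 w (x, t) :=
  (intervalIntegral.integral_eq_sub_of_hasDerivAt
    (fun t _ => hasDerivAt_slice_d2 (hw.differentiable one_ne_zero) x t)
    (((contDiff_d2 (n := 0) hw).continuous.comp (by fun_prop)).intervalIntegrable 0 y)).symm

lemma sq_setIntegral_le_measureReal_mul {α : Type*} [MeasurableSpace α] {μ : Measure α}
    {s : Set α} {f : α → ℝ} (hs : μ s ≠ ∞) (hf : IntegrableOn f s μ)
    (hf2 : IntegrableOn (fun x => f x ^ 2) s μ) :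
    (∫ x in s, f x ∂μ) ^ 2 ≤ μ.real s * ∫ x in s, f x ^ 2 ∂μ := by
  rcases eq_or_ne (μ s) 0 with h0 | h0
  · simp [Measure.restrict_eq_zero.mpr h0]
  have hpos : 0 < μ.real s := ENNReal.toReal_pos h0 hs
  have hjensen := even_two.convexOn_pow.map_set_average_le (continuous_pow 2).continuousOn
    isClosed_univ h0 hs (Eventually.of_forall fun x => mem_univ (f x)) hf hf2
  rw [setAverage_eq, setAverage_eq, smul_eq_mul, smul_eq_mul, mul_pow, inv_pow,
    ← div_eq_inv_mul, ← div_eq_inv_mul, div_le_div_iff₀ (by positivity) hpos] at hjensen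
  nlinarith

lemma sq_intervalIntegral_le_abs_mul {g : ℝ → ℝ} (hg : Continuous g) {s : Set ℝ}
    (hsg : IntegrableOn (fun t => g t ^ 2) s) {y : ℝ} (hy : Ι 0 y ⊆ s) :
    (∫ t in (0 : ℝ)..y, g t) ^ 2 ≤ |y| * ∫ t in s, g t ^ 2 := by
  have hvol : volume.real (Ι 0 y) = |y| := by
    rw [uIoc, volume_real_Ioc_of_le min_le_max, max_sub_min_eq_abs, sub_zero]
  calc (∫ t in (0 : ℝ)..y, g t) ^ 2 = (∫ t in Ι 0 y, g t) ^ 2 := by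
        rw [← sq_abs, intervalIntegral.abs_integral_eq_abs_integral_uIoc, sq_abs]
    _ ≤ volume.real (Ι 0 y) * ∫ t in Ι 0 y, g t ^ 2 :=
        sq_setIntegral_le_measureReal_mul measure_Ioc_lt_top.ne
          (hg.integrableOn_uIoc) ((hg.pow 2).integrableOn_uIoc)
    _ ≤ |y| * ∫ t in s, g t ^ 2 := by
        rw [hvol]
        exact mul_le_mul_of_nonneg_left
          (setIntegral_mono_set hsg (Eventually.of_forall fun t => sq_nonneg _) hy.eventuallyLE)
          (abs_nonneg y)

lemma integral_abs_Ioo_neg_one_one : ∫ y in Ioo (-1 : ℝ) 1, |y| = 1 := by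
  rw [← integral_Ioc_eq_integral_Ioo,
    ← Ioc_union_Ioc_eq_Ioc (by norm_num : (-1 : ℝ) ≤ 0) zero_le_one,
    setIntegral_union (Ioc_disjoint_Ioc_of_le le_rfl) measurableSet_Ioc
      continuous_abs.integrableOn_Ioc continuous_abs.integrableOn_Ioc]
  have hneg := integral_pow_abs_sub_uIoc (a := (0 : ℝ)) (b := -1) (n := 1)
  have hpos := integral_pow_abs_sub_uIoc (a := (0 : ℝ)) (b := 1) (n := 1)
  simp [uIoc_of_ge, uIoc_of_le] at hneg hpos
  rw [hneg, hpos]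
  norm_num

lemma abs_mul_le_mul_sq_add {ε : ℝ} (hε : 0 < ε) (a b : ℝ) :
    |a * b| ≤ ε / 2 * b ^ 2 + 1 / (2 * ε) * a ^ 2 := by
  have h := two_mul_le_add_sq (ε * |b|) |a|
  rw [mul_pow, sq_abs, sq_abs] at h
  rw [abs_mul]
  field_simp
  nlinarith [h]

lemma abs_integral_mul_le {α : Type*} [MeasurableSpace α] {μ : Measure α} {f g : α → ℝ}
    (hfg : Integrable (fun x => f x * g x) μ) (hf : Integrable (fun x => f x ^ 2) μ)
    (hg : Integrable (fun x => g x ^ 2) μ) {ε : ℝ} (hε : 0 < ε) :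
    |∫ x, f x * g x ∂μ| ≤ ε / 2 * ∫ x, g x ^ 2 ∂μ + 1 / (2 * ε) * ∫ x, f x ^ 2 ∂μ :=
  calc |∫ x, f x * g x ∂μ| ≤ ∫ x, |f x * g x| ∂μ := abs_integral_le_integral_abs
    _ ≤ ∫ x, (ε / 2 * g x ^ 2 + 1 / (2 * ε) * f x ^ 2) ∂μ :=
        integral_mono hfg.abs ((hg.const_mul _).add (hf.const_mul _))
          fun x => abs_mul_le_mul_sq_add hε (f x) (g x)
    _ = ε / 2 * ∫ x, g x ^ 2 ∂μ + 1 / (2 * ε) * ∫ x, f x ^ 2 ∂μ := by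
        rw [integral_add (hg.const_mul _) (hf.const_mul _), integral_const_mul, integral_const_mul]

lemma integrableOn_Omg {L : ℝ} {f : ℝ × ℝ → ℝ} (hf : Continuous f) : IntegrableOn f (Omg L) :=
  (hf.continuousOn.integrableOn_compact (isCompact_Icc.prod isCompact_Icc)).mono_set
    (prod_mono Ioo_subset_Icc_self Ioo_subset_Icc_self)

lemma setIntegral_Omg_mono_of_slices {L : ℝ} {f g : ℝ × ℝ → ℝ} (hf : Continuous f)
    (hg : Continuous g)
    (h : ∀ x, ∫ y in Ioo (-1 : ℝ) 1, f (x, y) ≤ ∫ y in Ioo (-1 : ℝ) 1, g (x, y)) :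
    ∫ p in Omg L, f p ≤ ∫ p in Omg L, g p := by
  have hprod : ∀ {u : ℝ × ℝ → ℝ}, Continuous u →
      Integrable u ((volume.restrict (Ioo 0 L)).prod (volume.restrict (Ioo (-1 : ℝ) 1))) :=
    fun hu => by rw [Measure.prod_restrict, ← Measure.volume_eq_prod]; exact integrableOn_Omg hu
  have hiter : ∀ {u : ℝ × ℝ → ℝ}, Continuous u →
      ∫ p in Omg L, u p = ∫ x in Ioo 0 L, ∫ y in Ioo (-1 : ℝ) 1, u (x, y) := fun hu => by
    rw [Omg, Measure.volume_eq_prod]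
    exact setIntegral_prod _ (by rw [← Measure.volume_eq_prod]; exact integrableOn_Omg hu)
  rw [hiter hf, hiter hg]
  exact integral_mono (hprod hf).integral_prod_left (hprod hg).integral_prod_left h

section SymmetricDivFree

variable {w₁ w₂ : ℝ × ℝ → ℝ}

lemma eq_neg_intervalIntegral_d1 (hw₂ : ContDiff ℝ 1 w₂) (hdiv : DivFree w₁ w₂)
    (hodd : ∀ x y : ℝ, w₂ (x, -y) = -w₂ (x, y)) (x y : ℝ) :
    w₂ (x, y) = -∫ t in (0 : ℝ)..y, d1 w₁ (x, t) := by
  have hzero : w₂ (x, 0) = 0 := by linarith [neg_zero (G := ℝ) ▸ hodd x 0]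
  have hftc := sub_eq_intervalIntegral_d2 hw₂ x y
  rw [hzero, sub_zero] at hftc
  rw [hftc, ← intervalIntegral.integral_neg]
  exact intervalIntegral.integral_congr fun t _ => eq_neg_of_add_eq_zero_right (hdiv (x, t))

lemma integral_sq_slice_le_integral_sq_d1 (hw₁ : ContDiff ℝ 1 w₁) (hw₂ : ContDiff ℝ 1 w₂)
    (hdiv : DivFree w₁ w₂) (hodd : ∀ x y : ℝ, w₂ (x, -y) = -w₂ (x, y)) (x : ℝ) :
    ∫ y in Ioo (-1 : ℝ) 1, w₂ (x, y) ^ 2 ≤ ∫ t in Ioo (-1 : ℝ) 1, d1 w₁ (x, t) ^ 2 := by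
  set I := ∫ t in Ioo (-1 : ℝ) 1, d1 w₁ (x, t) ^ 2
  have hd1 : Continuous fun t => d1 w₁ (x, t) :=
    (contDiff_d1 (n := 0) hw₁).continuous.comp (by fun_prop)
  have hpt : ∀ y ∈ Ioo (-1 : ℝ) 1, w₂ (x, y) ^ 2 ≤ |y| * I := fun y hy => by
    rw [eq_neg_intervalIntegral_d1 hw₂ hdiv hodd, neg_sq]
    exact sq_intervalIntegral_le_abs_mul hd1
      ((hd1.pow 2).integrableOn_Icc.mono_set Ioo_subset_Icc_self)
      (uIoc_subset_uIcc.trans (ordConnected_Ioo.uIcc_subset (by norm_num) hy))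
  calc ∫ y in Ioo (-1 : ℝ) 1, w₂ (x, y) ^ 2 ≤ ∫ y in Ioo (-1 : ℝ) 1, |y| * I :=
        setIntegral_mono_on
          (((hw₂.continuous.comp (by fun_prop)).pow 2).integrableOn_Icc.mono_set Ioo_subset_Icc_self)
          ((continuous_abs.mul continuous_const).integrableOn_Icc.mono_set Ioo_subset_Icc_self)
          measurableSet_Ioo hpt
    _ = I := by rw [integral_mul_const, integral_abs_Ioo_neg_one_one, one_mul]

theorem nrmSq_le_gradNrmSq (hw₁ : ContDiff ℝ 1 w₁) (hw₂ : ContDiff ℝ 1 w₂)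
    (hdiv : DivFree w₁ w₂) (hodd : ∀ x y : ℝ, w₂ (x, -y) = -w₂ (x, y)) (L : ℝ) :
    nrmSq L w₂ ≤ gradNrmSq L w₁ := by
  have hd1 := (contDiff_d1 (n := 0) hw₁).continuous
  calc nrmSq L w₂ ≤ ∫ p in Omg L, d1 w₁ p ^ 2 :=
        setIntegral_Omg_mono_of_slices (hw₂.continuous.pow 2) (hd1.pow 2)
          (integral_sq_slice_le_integral_sq_d1 hw₁ hw₂ hdiv hodd)
    _ ≤ gradNrmSq L w₁ :=
        setIntegral_mono (integrableOn_Omg (hd1.pow 2))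
          (integrableOn_Omg ((hd1.pow 2).add ((contDiff_d2 (n := 0) hw₁).continuous.pow 2)))
          fun p => le_add_of_nonneg_right (sq_nonneg _)

end SymmetricDivFree

theorem vertical_laplacian_estimate_general (L : ℝ) (κ : ℝ) (hκ : 0 < κ)
    (w₁ w₂ ξ : ℝ × ℝ → ℝ)
    (hw₁ : ContDiff ℝ (⊤ : ℕ∞) w₁) (hw₂ : ContDiff ℝ (⊤ : ℕ∞) w₂) (hξ : ContDiff ℝ (⊤ : ℕ∞) ξ)
    (hdiv : DivFree w₁ w₂) (hsym : Symm w₁ w₂) :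
    |∫ p in Omg L, w₂ p * lap ξ p| ≤
      κ / 20 * lapNrmSq L ξ + 5 / κ * gradNrmSq L w₁ := by
  have hw₂c := hw₂.continuous
  have hlap := continuous_lap (hξ.of_le (WithTop.coe_le_coe.mpr le_top))
  have hyoung := abs_integral_mul_le (integrableOn_Omg (L := L) (hw₂c.mul hlap))
    (integrableOn_Omg (hw₂c.pow 2)) (integrableOn_Omg (hlap.pow 2)) (by positivity : 0 < κ / 10)
  have hε : κ / 10 / 2 = κ / 20 ∧ 1 / (2 * (κ / 10)) = 5 / κ := by
    constructor <;> field_simp <;> ring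
  rw [hε.1, hε.2] at hyoung
  calc |∫ p in Omg L, w₂ p * lap ξ p| ≤ κ / 20 * lapNrmSq L ξ + 5 / κ * nrmSq L w₂ := hyoung
    _ ≤ κ / 20 * lapNrmSq L ξ + 5 / κ * gradNrmSq L w₁ := by
        gcongr
        exact nrmSq_le_gradNrmSq (hw₁.of_le (WithTop.coe_le_coe.mpr le_top))
          (hw₂.of_le (WithTop.coe_le_coe.mpr le_top)) hdiv hsym.2 L

/-- estimate (3.22) of the paper:
`|∫_Ω w₂ Δξ| ≤ (κ/20)‖Δξ‖² + (5/κ)‖∇w₁‖²`. -/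
theorem vertical_laplacian_estimate (L : ℝ) (hL : 0 < L) (κ : ℝ) (hκ : 0 < κ)
    (w₁ w₂ ξ : ℝ × ℝ → ℝ)
    (hw₁ : ContDiff ℝ (⊤ : ℕ∞) w₁) (hw₂ : ContDiff ℝ (⊤ : ℕ∞) w₂) (hξ : ContDiff ℝ (⊤ : ℕ∞) ξ)
    (hpw₁ : OmgPeriodic L w₁) (hpw₂ : OmgPeriodic L w₂) (hpξ : OmgPeriodic L ξ)
    (hdiv : DivFree w₁ w₂) (hsym : Symm w₁ w₂) :
    |∫ p in Omg L, w₂ p * lap ξ p| ≤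
      κ / 20 * lapNrmSq L ξ + 5 / κ * gradNrmSq L w₁ :=
  vertical_laplacian_estimate_general L κ hκ w₁ w₂ ξ hw₁ hw₂ hξ hdiv hsym
end
end
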